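/- arXiv:2505.19677 — 2 statements merged into one kernel-verified Lean document; each statement's English description precedes it below -/
import Mathlib

section
/- Let G be the generalized dihedral group on a finite abelian group A with involution t, and let S ⊆ G be an inverse-closed generating set with |S| = 4 and |S ∩ At| = 1. Then Cay(G,S) does not admit a perfect code. -/
def cayGraph {G : Type*} [Group G] (S : Set G) : SimpleGraph G :=
  SimpleGraph.fromRel (fun x y => y * x⁻¹ ∈ S)

def IsPerfectCode {V : Type*} (Γ : SimpleGraph V) (D : Set V) : Prop :=
  ∀ v : V, ∃! d, d ∈ D ∧ (d = v ∨ Γ.Adj d v)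

/-!
Write `S = {w, b, y, z}` with `w ∈ At` and `b, y, z ∈ A`; like `t`, the element `w` is an
involution inverting `A`. Inversion permutes the three-element set `S ∩ A`, so it fixes some `b`,
and `{y, z}` is closed under inversion. Then `H = {1, b, w, bw}` is a Klein four-group, and if `f`
is the indicator of a perfect code, the number `K v` of code elements in the coset `Hv` satisfies
`3 K v + K (y v) + K (z v) = 4`: add up the closed-neighbourhood conditions at the four points of
`Hv`. Hence `K ≤ 1` everywhere, then `K ≥ 1` everywhere, and finally `5 ≤ 4`.
-/

section Cayley

variable {G : Type*} [Group G] {S : Set G}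

lemma eq_or_cayGraph_adj_iff (hSinv : ∀ s ∈ S, s⁻¹ ∈ S) (hS1 : (1 : G) ∉ S) {x y : G} :
    x = y ∨ (cayGraph S).Adj x y ↔ x * y⁻¹ ∈ insert 1 S := by
  have hS : ∀ s, s⁻¹ ∈ S ↔ s ∈ S := fun s => ⟨fun h => inv_inv s ▸ hSinv _ h, hSinv s⟩
  rw [Set.mem_insert_iff, mul_inv_eq_one, cayGraph, SimpleGraph.fromRel_adj, ← hS, mul_inv_rev,
    inv_inv, or_self]
  refine or_congr_right ⟨And.right, fun h => ⟨fun hxy => hS1 ?_, h⟩⟩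
  rwa [hxy, mul_inv_cancel] at h

lemma IsPerfectCode.sum_indicator_mul_eq_one {D : Set G} (hD : IsPerfectCode (cayGraph S) D)
    (hSinv : ∀ s ∈ S, s⁻¹ ∈ S) (hS1 : (1 : G) ∉ S) {N : Finset G}
    (hN : (N : Set G) = insert 1 S) (v : G) : ∑ s ∈ N, D.indicator 1 (s * v) = 1 := by
  classical
  have hN' : ∀ s, s ∈ N ↔ s ∈ insert 1 S := fun s => by rw [← Finset.mem_coe, hN]
  simp only [Set.indicator_apply, Pi.one_apply, Finset.sum_boole, Nat.cast_id,
    Finset.card_eq_one_iff_existsUnique, Finset.mem_filter, hN']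
  obtain ⟨d, ⟨hdD, hdv⟩, hd_unique⟩ := hD v
  refine ⟨d * v⁻¹, ⟨(eq_or_cayGraph_adj_iff hSinv hS1).1 hdv, by simpa⟩, ?_⟩
  rintro s ⟨hs, hsv⟩
  rw [← hd_unique (s * v) ⟨hsv, (eq_or_cayGraph_adj_iff hSinv hS1).2 (by simpa)⟩,
    mul_inv_cancel_right]

end Cayley

section InverseClosed

variable {G : Type*} [Group G]

lemma exists_mem_mul_self_eq_one_of_ncard_eq_three {T : Set G} (hT : ∀ x ∈ T, x⁻¹ ∈ T)
    (h3 : T.ncard = 3) : ∃ b ∈ T, b * b = 1 := by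
  obtain ⟨x₁, x₂, x₃, h₁₂, h₁₃, h₂₃, rfl⟩ := Set.ncard_eq_three.1 h3
  simp only [Set.mem_insert_iff, Set.mem_singleton_iff, forall_eq_or_imp, forall_eq] at hT
  simp only [Set.mem_insert_iff, Set.mem_singleton_iff, exists_eq_or_imp,
    mul_eq_one_iff_eq_inv]
  grind [inv_inv]

lemma mul_self_and_or_mul_eq_one {y z : G} (hyz : y ≠ z)
    (h : ∀ x ∈ ({y, z} : Set G), x⁻¹ ∈ ({y, z} : Set G)) :
    (y * y = 1 ∧ z * z = 1) ∨ y * z = 1 := by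
  simp only [Set.mem_insert_iff, Set.mem_singleton_iff, forall_eq_or_imp, forall_eq] at h
  simp only [mul_eq_one_iff_eq_inv]
  grind [inv_inv]

lemma exists_eq_insert_of_sdiff_eq_singleton {A : Subgroup G} {S : Set G}
    (hSinv : ∀ s ∈ S, s⁻¹ ∈ S) (hScard : S.ncard = 4) {w : G} (hSA : S \ A = {w}) :
    ∃ b y z, b ∈ A ∧ y ∈ A ∧ z ∈ A ∧ b * b = 1 ∧ ((y * y = 1 ∧ z * z = 1) ∨ y * z = 1) ∧
      b ≠ y ∧ b ≠ z ∧ y ≠ z ∧ S = {w, b, y, z} := by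
  have hT3 : (S ∩ A).ncard = 3 := by
    have := Set.ncard_inter_add_ncard_sdiff_eq_ncard S A
      (Set.finite_of_ncard_ne_zero (by omega))
    rw [hSA, Set.ncard_singleton, hScard] at this
    omega
  set T := S ∩ A
  have hT : ∀ x ∈ T, x⁻¹ ∈ T := fun x hx => ⟨hSinv x hx.1, A.inv_mem hx.2⟩
  obtain ⟨b, hbT, hbb⟩ := exists_mem_mul_self_eq_one_of_ncard_eq_three hT hT3
  obtain ⟨y, z, hyz, hTb⟩ := Set.ncard_eq_two.1 <| by
    rw [Set.ncard_sdiff_singleton_of_mem hbT, hT3]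
  have hy : y ∈ T \ {b} := hTb ▸ Set.mem_insert _ _
  have hz : z ∈ T \ {b} := hTb ▸ Set.mem_insert_of_mem _ rfl
  have hb : b ∉ ({y, z} : Set G) := hTb ▸ fun h => h.2 rfl
  have hyz_inv : ∀ x ∈ ({y, z} : Set G), x⁻¹ ∈ ({y, z} : Set G) := by
    rw [← hTb]
    refine fun x hx => ⟨hT x hx.1, fun hxb => hx.2 ?_⟩
    rw [Set.mem_singleton_iff, inv_eq_iff_eq_inv] at hxb
    rw [Set.mem_singleton_iff, hxb, inv_eq_of_mul_eq_one_right hbb]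
  refine ⟨b, y, z, hbT.2, hy.1.2, hz.1.2, hbb, mul_self_and_or_mul_eq_one hyz hyz_inv,
    fun h => hb (h ▸ Set.mem_insert _ _), fun h => hb (h ▸ Set.mem_insert_of_mem _ rfl), hyz, ?_⟩
  calc S = S \ A ∪ T := (Set.sdiff_union_inter S A).symm
    _ = {w, b, y, z} := by
      rw [hSA, Set.singleton_union, ← Set.insert_eq_of_mem hbT,
        ← Set.insert_sdiff_singleton (s := T), hTb]

end InverseClosed

section GeneralizedDihedral

variable {G : Type*} [Group G] {A : Subgroup G} {t : G}

lemma exists_mem_eq_mul_iff_notMem (ht : t * t = 1) (htA : t ∉ A) (hidx : A.index = 2)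
    (g : G) : (∃ a ∈ A, g = a * t) ↔ g ∉ A := by
  refine ⟨fun ⟨a, ha, hg⟩ hgA => htA ((A.mul_mem_cancel_left ha).1 (hg ▸ hgA)), fun hg => ?_⟩
  exact ⟨g * t, (Subgroup.mul_mem_iff_of_index_two hidx).2 (iff_of_false hg htA),
    by rw [mul_assoc, ht, mul_one]⟩

lemma mul_mul_eq_inv_of_notMem (ht : t * t = 1) (htA : t ∉ A) (hidx : A.index = 2)
    (hconj : ∀ a ∈ A, t * a * t = a⁻¹) {g : G} (hg : g ∉ A) :
    ∀ a ∈ A, g * a * g = a⁻¹ := by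
  obtain ⟨c, hc, rfl⟩ := (exists_mem_eq_mul_iff_notMem ht htA hidx g).2 hg
  intro a ha
  calc c * t * a * (c * t) = c * (t * (a * c) * t) := by group
    _ = a⁻¹ := by rw [hconj _ (A.mul_mem ha hc)]; group

end GeneralizedDihedral

lemma false_of_forall_three_mul_add_add_eq_four {α : Type*} [Nonempty α] (K : α → ℕ)
    (p q : α → α) (h : ∀ v, 3 * K v + K (p v) + K (q v) = 4) : False := by
  have hK_le : ∀ v, K v ≤ 1 := fun v => by have := h v; omega
  have hK_ge : ∀ v, 1 ≤ K v := fun v => by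
    have h₁ := h v; have h₂ := hK_le (p v); have h₃ := hK_le (q v); omega
  obtain ⟨v⟩ := ‹Nonempty α›
  have h₁ := h v; have h₂ := hK_ge v; have h₃ := hK_ge (p v); have h₄ := hK_ge (q v); omega

section Klein

variable {G : Type*} [Group G] {b w y z : G}

def kleinCosetSum (f : G → ℕ) (b w u : G) : ℕ :=
  f u + f (b * u) + f (w * u) + f (b * (w * u))

lemma mul_mul_left_eq_of_mul_mul_eq_inv {x : G} (hw : w * w = 1) (hwx : w * x * w = x⁻¹)
    (u : G) : x * (w * u) = w * (x⁻¹ * u) := by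
  rw [← hwx, mul_assoc, mul_assoc, ← mul_assoc w w, hw, one_mul]

lemma three_mul_kleinCosetSum_add_add_eq_four (f : G → ℕ)
    (hb : b * b = 1) (hw : w * w = 1) (hwb : w * b * w = b⁻¹) (hwy : w * y * w = y⁻¹)
    (hwz : w * z * w = z⁻¹) (hby : b * y = y * b) (hbz : b * z = z * b)
    (hyz : (y * y = 1 ∧ z * z = 1) ∨ y * z = 1)
    (hf : ∀ v, f v + f (w * v) + f (b * v) + f (y * v) + f (z * v) = 1) (v : G) :
    3 * kleinCosetSum f b w v + kleinCosetSum f b w (y * v) + kleinCosetSum f b w (z * v) =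
      4 := by
  have hb_inv : b⁻¹ = b := inv_eq_of_mul_eq_one_right hb
  have hb' : ∀ u, b * (b * u) = u := fun u => by rw [← mul_assoc, hb, one_mul]
  have hw' : ∀ u, w * (w * u) = u := fun u => by rw [← mul_assoc, hw, one_mul]
  have hwb' : ∀ u, b * (w * u) = w * (b * u) := fun u => by
    rw [mul_mul_left_eq_of_mul_mul_eq_inv hw hwb, hb_inv]
  have hby' : ∀ u, y * (b * u) = b * (y * u) := fun u => by rw [← mul_assoc, ← hby, mul_assoc]
  have hbz' : ∀ u, z * (b * u) = b * (z * u) := fun u => by rw [← mul_assoc, ← hbz, mul_assoc]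
  have hwy' := mul_mul_left_eq_of_mul_mul_eq_inv hw hwy
  have hwz' := mul_mul_left_eq_of_mul_mul_eq_inv hw hwz
  have hinv : f (w * (y⁻¹ * v)) + f (b * (w * (y⁻¹ * v))) + f (w * (z⁻¹ * v))
        + f (b * (w * (z⁻¹ * v))) =
      f (w * (y * v)) + f (b * (w * (y * v))) + f (w * (z * v)) + f (b * (w * (z * v))) := by
    rcases hyz with ⟨hy, hz⟩ | hyz
    · rw [inv_eq_of_mul_eq_one_right hy, inv_eq_of_mul_eq_one_right hz]
    · rw [inv_eq_of_mul_eq_one_right hyz, inv_eq_of_mul_eq_one_left hyz]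
      ring
  have h₁ := hf v
  have h₂ := hf (b * v)
  have h₃ := hf (w * v)
  have h₄ := hf (b * (w * v))
  rw [hb', hby', hbz', ← hwb'] at h₂
  rw [hw', hwy', hwz'] at h₃
  rw [hby', hbz', hb', hwy', hwz', ← hwb', hw'] at h₄
  unfold kleinCosetSum
  omega

lemma false_of_forall_closedNbhd_sum_eq_one (f : G → ℕ)
    (hb : b * b = 1) (hw : w * w = 1) (hwb : w * b * w = b⁻¹) (hwy : w * y * w = y⁻¹)
    (hwz : w * z * w = z⁻¹) (hby : b * y = y * b) (hbz : b * z = z * b)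
    (hyz : (y * y = 1 ∧ z * z = 1) ∨ y * z = 1)
    (hf : ∀ v, f v + f (w * v) + f (b * v) + f (y * v) + f (z * v) = 1) : False :=
  false_of_forall_three_mul_add_add_eq_four _ (y * ·) (z * ·)
    (three_mul_kleinCosetSum_add_add_eq_four f hb hw hwb hwy hwz hby hbz hyz hf)

end Klein

theorem stmt_12_general {G : Type*} [Group G]
    (A : Subgroup G) (hA : ∀ a ∈ A, ∀ b ∈ A, a * b = b * a)
    (t : G) (ht : t * t = 1) (htA : t ∉ A) (hidx : A.index = 2)
    (hconj : ∀ a ∈ A, t * a * t = a⁻¹)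
    (S : Set G) (hSinv : ∀ s ∈ S, s⁻¹ ∈ S) (hS1 : (1 : G) ∉ S)
    (hScard : S.ncard = 4)
    (hSAt : (S ∩ {g : G | ∃ a ∈ A, g = a * t}).ncard = 1) :
    ¬ ∃ D : Set G, IsPerfectCode (cayGraph S) D := by
  classical
  rintro ⟨D, hD⟩
  have hcoset : {g : G | ∃ a ∈ A, g = a * t} = (A : Set G)ᶜ :=
    Set.ext (exists_mem_eq_mul_iff_notMem ht htA hidx)
  obtain ⟨w, hSA⟩ := Set.ncard_eq_one.1 (by rwa [hcoset, ← Set.sdiff_eq] at hSAt)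
  have hwA : w ∉ A := (hSA ▸ Set.mem_singleton w : w ∈ S \ A).2
  obtain ⟨b, y, z, hb, hy, hz, hbb, hyz, hb_ne_y, hb_ne_z, hy_ne_z, rfl⟩ :=
    exists_eq_insert_of_sdiff_eq_singleton hSinv hScard hSA
  have hw := mul_mul_eq_inv_of_notMem ht htA hidx hconj hwA
  refine false_of_forall_closedNbhd_sum_eq_one (D.indicator 1) hbb
    (by simpa using hw 1 A.one_mem) (hw b hb) (hw y hy) (hw z hz) (hA b hb y hy) (hA b hb z hz)
    hyz fun v => ?_
  have hsum := hD.sum_indicator_mul_eq_one hSinv hS1 (N := {1, w, b, y, z}) (by push_cast; rfl) v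
  rw [Finset.sum_insert, Finset.sum_insert, Finset.sum_insert, Finset.sum_insert,
    Finset.sum_singleton, one_mul] at hsum
  · simpa only [add_assoc] using hsum
  · simpa using hy_ne_z
  · simpa using ⟨hb_ne_y, hb_ne_z⟩
  · simp only [Finset.mem_insert, Finset.mem_singleton]
    rintro (rfl | rfl | rfl) <;> contradiction
  · simpa using hS1

theorem stmt_12 {G : Type*} [Group G] [Fintype G]
    (A : Subgroup G) (hA : ∀ a ∈ A, ∀ b ∈ A, a * b = b * a)
    (t : G) (ht : t * t = 1) (htA : t ∉ A) (hidx : A.index = 2)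
    (hconj : ∀ a ∈ A, t * a * t = a⁻¹)
    (S : Set G) (hSinv : ∀ s ∈ S, s⁻¹ ∈ S) (hS1 : (1 : G) ∉ S)
    (hScard : S.ncard = 4) (hSgen : Subgroup.closure S = ⊤)
    (hSAt : (S ∩ {g : G | ∃ a ∈ A, g = a * t}).ncard = 1) :
    ¬ ∃ D : Set G, IsPerfectCode (cayGraph S) D :=
  stmt_12_general A hA t ht htA hidx hconj S hSinv hS1 hScard hSAt
end

section
/- Let G be the generalized dihedral group on a finite abelian group A with involution t, and S = {s₁, s₂, t, t s₀} ⊆ G inverse-closed with s₀, s₁, s₂ ∈ A, ⟨S⟩ = G, and s₁, s₂ both involutions. Then Cay(G,S) does not admit a perfect code. -/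
open scoped Classical in
noncomputable def cnt {α : Type*} (D : Set α) (g : α) : ℕ :=
  if g ∈ D then 1 else 0

private lemma mulmul {G : Type*} [Group G] {a b c d : G} (h : a * b = c * d) (y : G) :
    a * (b * y) = c * (d * y) := by rw [← mul_assoc, h, mul_assoc]

private lemma mulmul1 {G : Type*} [Group G] {a b : G} (h : a * b = 1) (y : G) :
    a * (b * y) = y := by rw [← mul_assoc, h, one_mul]

private lemma cnt_exact_one {α : Type*} (D : Set α) {v1 v2 v3 v4 v5 : α}
    (hex : v1 ∈ D ∨ v2 ∈ D ∨ v3 ∈ D ∨ v4 ∈ D ∨ v5 ∈ D)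
    (h12 : ¬(v1 ∈ D ∧ v2 ∈ D)) (h13 : ¬(v1 ∈ D ∧ v3 ∈ D))
    (h14 : ¬(v1 ∈ D ∧ v4 ∈ D)) (h15 : ¬(v1 ∈ D ∧ v5 ∈ D))
    (h23 : ¬(v2 ∈ D ∧ v3 ∈ D)) (h24 : ¬(v2 ∈ D ∧ v4 ∈ D))
    (h25 : ¬(v2 ∈ D ∧ v5 ∈ D)) (h34 : ¬(v3 ∈ D ∧ v4 ∈ D))
    (h35 : ¬(v3 ∈ D ∧ v5 ∈ D)) (h45 : ¬(v4 ∈ D ∧ v5 ∈ D)) :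
    cnt D v1 + cnt D v2 + cnt D v3 + cnt D v4 + cnt D v5 = 1 := by
  classical
  unfold cnt
  by_cases h1 : v1 ∈ D <;> by_cases h2 : v2 ∈ D <;> by_cases h3 : v3 ∈ D <;>
    by_cases h4 : v4 ∈ D <;> by_cases h5 : v5 ∈ D <;> simp_all

private lemma numeric_final : ∀ a1 a0 am am2 b1 b0 bm : ℕ,
    3 * a1 + b1 + b0 = 4 → 3 * am + bm + b1 = 4 → 3 * b1 + a1 + am = 4 →
    3 * b0 + a0 + a1 = 4 → 3 * bm + am + am2 = 4 → False := by
  intro a1 a0 am am2 b1 b0 bm h1 h2 h3 h4 h5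
  have hb1 : b1 ≤ 1 := by clear h1 h2 h4 h5; omega
  have hb0 : b0 ≤ 1 := by clear h1 h2 h3 h5; omega
  have hbm : bm ≤ 1 := by clear h1 h2 h3 h4; omega
  have ha1 : a1 = 1 := by clear h2 h3 h4 h5 hbm; omega
  have ham : am = 1 := by clear h1 h3 h4 h5 hb0; omega
  clear h1 h2 h4 h5 hb1 hb0 hbm
  omega

theorem stmt_14 {G : Type*} [Group G] [Fintype G]
    (A : Subgroup G) (hA : ∀ a ∈ A, ∀ b ∈ A, a * b = b * a)
    (t : G) (ht : t * t = 1) (htA : t ∉ A) (hidx : A.index = 2)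
    (hconj : ∀ a ∈ A, t * a * t = a⁻¹)
    (s₀ s₁ s₂ : G) (hs₀ : s₀ ∈ A) (hs₁ : s₁ ∈ A) (hs₂ : s₂ ∈ A)
    (hs₁inv : s₁ * s₁ = 1) (hs₁ne : s₁ ≠ 1)
    (hs₂inv : s₂ * s₂ = 1) (hs₂ne : s₂ ≠ 1)
    (S : Set G) (hS : S = {s₁, s₂, t, t * s₀}) (hScard : S.ncard = 4)
    (hSgen : Subgroup.closure S = ⊤) :
    ¬ ∃ D : Set G, IsPerfectCode (cayGraph S) D := by
  rintro ⟨D, hD⟩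
  classical
  -- basic inverse facts
  have ht_inv : t⁻¹ = t := inv_eq_of_mul_eq_one_right ht
  have hs1_inv : s₁⁻¹ = s₁ := inv_eq_of_mul_eq_one_right hs₁inv
  have hs2_inv : s₂⁻¹ = s₂ := inv_eq_of_mul_eq_one_right hs₂inv
  -- commutation facts
  have hc21 : s₂ * s₁ = s₁ * s₂ := hA s₂ hs₂ s₁ hs₁
  have hc01 : s₀ * s₁ = s₁ * s₀ := hA s₀ hs₀ s₁ hs₁
  have hc02 : s₀ * s₂ = s₂ * s₀ := hA s₀ hs₀ s₂ hs₂
  have hc01' : s₀⁻¹ * s₁ = s₁ * s₀⁻¹ := hA s₀⁻¹ (A.inv_mem hs₀) s₁ hs₁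
  have hc02' : s₀⁻¹ * s₂ = s₂ * s₀⁻¹ := hA s₀⁻¹ (A.inv_mem hs₀) s₂ hs₂
  have hts0t : t * s₀ * t = s₀⁻¹ := hconj s₀ hs₀
  have bt1 : s₁ * t = t * s₁ := by
    have h := hconj s₁ hs₁
    rw [hs1_inv] at h
    calc s₁ * t = t * s₁ * t * t := by rw [h]
    _ = t * s₁ := by rw [mul_assoc, ht, mul_one]
  have bt2 : s₂ * t = t * s₂ := by
    have h := hconj s₂ hs₂
    rw [hs2_inv] at h
    calc s₂ * t = t * s₂ * t * t := by rw [h]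
    _ = t * s₂ := by rw [mul_assoc, ht, mul_one]
  have bt0 : s₀ * t = t * s₀⁻¹ := by
    have h := hconj s₀⁻¹ (A.inv_mem hs₀)
    rw [inv_inv] at h
    calc s₀ * t = t * s₀⁻¹ * t * t := by rw [h]
    _ = t * s₀⁻¹ := by rw [mul_assoc, ht, mul_one]
  have bt0' : s₀⁻¹ * t = t * s₀ := by
    calc s₀⁻¹ * t = t * s₀ * t * t := by rw [hts0t]
    _ = t * s₀ := by rw [mul_assoc, ht, mul_one]
  have hts0_invol : t * s₀ * (t * s₀) = 1 := by
    rw [← mul_assoc, hts0t, inv_mul_cancel]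
  have hts0_inv : (t * s₀)⁻¹ = t * s₀ := inv_eq_of_mul_eq_one_right hts0_invol
  -- inequalities from the cardinality of S
  have hcard3 : ∀ x y z : G, ({x, y, z} : Set G).ncard ≠ 4 := by
    intro x y z h
    have h1 : ({x, y, z} : Set G).ncard ≤ ({y, z} : Set G).ncard + 1 :=
      Set.ncard_insert_le _ _
    have h2 : ({y, z} : Set G).ncard ≤ ({z} : Set G).ncard + 1 :=
      Set.ncard_insert_le _ _
    have h3 : ({z} : Set G).ncard = 1 := Set.ncard_singleton z
    omega
  have h12ne : s₁ ≠ s₂ := by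
    intro h
    apply hcard3 s₂ t (t * s₀)
    have e : S = ({s₂, t, t * s₀} : Set G) := by
      rw [hS, h]
      ext x
      simp only [Set.mem_insert_iff, Set.mem_singleton_iff]
      tauto
    rw [← e]; exact hScard
  have hs0ne : s₀ ≠ 1 := by
    intro h
    apply hcard3 s₁ s₂ t
    have e : S = ({s₁, s₂, t} : Set G) := by
      rw [hS, h, mul_one]
      ext x
      simp only [Set.mem_insert_iff, Set.mem_singleton_iff]
      tauto
    rw [← e]; exact hScard
  have htne1 : t ≠ 1 := fun h => htA (by rw [h]; exact A.one_mem)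
  have hts0A : t * s₀ ∉ A := by
    intro h
    have h2 := A.mul_mem h (A.inv_mem hs₀)
    rw [mul_assoc, mul_inv_cancel, mul_one] at h2
    exact htA h2
  have hts0ne1 : t * s₀ ≠ 1 := fun h => hts0A (by rw [h]; exact A.one_mem)
  have q24 : s₁ ≠ t := fun h => htA (h ▸ hs₁)
  have q34 : s₂ ≠ t := fun h => htA (h ▸ hs₂)
  have q25 : s₁ ≠ t * s₀ := fun h => hts0A (h ▸ hs₁)
  have q35 : s₂ ≠ t * s₀ := fun h => hts0A (h ▸ hs₂)
  have q45 : t ≠ t * s₀ := by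
    intro h
    apply hs0ne
    have h' : t * 1 = t * s₀ := by rw [mul_one]; exact h
    exact (mul_left_cancel h').symm
  -- membership characterization
  have hmemS : ∀ g : G, g ∈ S ↔ g = s₁ ∨ g = s₂ ∨ g = t ∨ g = t * s₀ := by
    intro g; rw [hS]; simp only [Set.mem_insert_iff, Set.mem_singleton_iff]
  have hdom : ∀ v g : G, (g = v ∨ (cayGraph S).Adj g v) ↔
      (g = v ∨ g = s₁ * v ∨ g = s₂ * v ∨ g = t * v ∨ g = t * s₀ * v) := by
    intro v g
    simp only [cayGraph, SimpleGraph.fromRel_adj]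
    constructor
    · rintro (rfl | ⟨hne, hmem | hmem⟩)
      · exact Or.inl rfl
      · -- hmem : v * g⁻¹ ∈ S
        rcases (hmemS _).mp hmem with e | e | e | e
        · right; left
          have hv : v = s₁ * g := by rw [← e, inv_mul_cancel_right]
          rw [hv]; exact (mulmul1 hs₁inv g).symm
        · right; right; left
          have hv : v = s₂ * g := by rw [← e, inv_mul_cancel_right]
          rw [hv]; exact (mulmul1 hs₂inv g).symm
        · right; right; right; left
          have hv : v = t * g := by rw [← e, inv_mul_cancel_right]
          rw [hv]; exact (mulmul1 ht g).symm
        · right; right; right; right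
          have hv : v = t * s₀ * g := by rw [← e, inv_mul_cancel_right]
          rw [hv]; exact (mulmul1 hts0_invol g).symm
      · -- hmem : g * v⁻¹ ∈ S
        rcases (hmemS _).mp hmem with e | e | e | e
        · right; left; rw [← e, inv_mul_cancel_right]
        · right; right; left; rw [← e, inv_mul_cancel_right]
        · right; right; right; left; rw [← e, inv_mul_cancel_right]
        · right; right; right; right; rw [← e, inv_mul_cancel_right]
    · rintro (rfl | rfl | rfl | rfl | rfl)
      · exact Or.inl rfl
      · refine Or.inr ⟨fun h => hs₁ne (mul_right_cancel (h.trans (one_mul v).symm)),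
          Or.inr ?_⟩
        rw [mul_inv_cancel_right]; exact (hmemS _).mpr (Or.inl rfl)
      · refine Or.inr ⟨fun h => hs₂ne (mul_right_cancel (h.trans (one_mul v).symm)),
          Or.inr ?_⟩
        rw [mul_inv_cancel_right]; exact (hmemS _).mpr (Or.inr (Or.inl rfl))
      · refine Or.inr ⟨fun h => htne1 (mul_right_cancel (h.trans (one_mul v).symm)),
          Or.inr ?_⟩
        rw [mul_inv_cancel_right]; exact (hmemS _).mpr (Or.inr (Or.inr (Or.inl rfl)))
      · refine Or.inr ⟨fun h => hts0ne1 (mul_right_cancel (h.trans (one_mul v).symm)),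
          Or.inr ?_⟩
        rw [mul_inv_cancel_right]; exact (hmemS _).mpr (Or.inr (Or.inr (Or.inr rfl)))
  -- the exactly-one equation
  have hu : ∀ v : G, cnt D v + cnt D (s₁ * v) + cnt D (s₂ * v) + cnt D (t * v) +
      cnt D (t * s₀ * v) = 1 := by
    intro v
    obtain ⟨w, ⟨hwD, hwdom⟩, hq⟩ := hD v
    rw [hdom] at hwdom
    have huni : ∀ g : G, g ∈ D →
        (g = v ∨ g = s₁ * v ∨ g = s₂ * v ∨ g = t * v ∨ g = t * s₀ * v) → g = w :=
      fun g hg hm => hq g ⟨hg, (hdom v g).mpr hm⟩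
    refine cnt_exact_one D ?_ ?_ ?_ ?_ ?_ ?_ ?_ ?_ ?_ ?_ ?_
    · rcases hwdom with rfl | h | h | h | h
      · exact Or.inl hwD
      · exact Or.inr (Or.inl (h ▸ hwD))
      · exact Or.inr (Or.inr (Or.inl (h ▸ hwD)))
      · exact Or.inr (Or.inr (Or.inr (Or.inl (h ▸ hwD))))
      · exact Or.inr (Or.inr (Or.inr (Or.inr (h ▸ hwD))))
    · rintro ⟨ha, hb⟩
      have e := (huni _ ha (Or.inl rfl)).trans (huni _ hb (Or.inr (Or.inl rfl))).symm
      have e' : (1 : G) * v = s₁ * v := by rw [one_mul]; exact e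
      exact hs₁ne (mul_right_cancel e').symm
    · rintro ⟨ha, hb⟩
      have e := (huni _ ha (Or.inl rfl)).trans
        (huni _ hb (Or.inr (Or.inr (Or.inl rfl)))).symm
      have e' : (1 : G) * v = s₂ * v := by rw [one_mul]; exact e
      exact hs₂ne (mul_right_cancel e').symm
    · rintro ⟨ha, hb⟩
      have e := (huni _ ha (Or.inl rfl)).trans
        (huni _ hb (Or.inr (Or.inr (Or.inr (Or.inl rfl))))).symm
      have e' : (1 : G) * v = t * v := by rw [one_mul]; exact e
      exact htne1 (mul_right_cancel e').symm
    · rintro ⟨ha, hb⟩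
      have e := (huni _ ha (Or.inl rfl)).trans
        (huni _ hb (Or.inr (Or.inr (Or.inr (Or.inr rfl))))).symm
      have e' : (1 : G) * v = t * s₀ * v := by rw [one_mul]; exact e
      exact hts0ne1 (mul_right_cancel e').symm
    · rintro ⟨ha, hb⟩
      have e := (huni _ ha (Or.inr (Or.inl rfl))).trans
        (huni _ hb (Or.inr (Or.inr (Or.inl rfl)))).symm
      exact h12ne (mul_right_cancel e)
    · rintro ⟨ha, hb⟩
      have e := (huni _ ha (Or.inr (Or.inl rfl))).trans
        (huni _ hb (Or.inr (Or.inr (Or.inr (Or.inl rfl))))).symm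
      exact q24 (mul_right_cancel e)
    · rintro ⟨ha, hb⟩
      have e := (huni _ ha (Or.inr (Or.inl rfl))).trans
        (huni _ hb (Or.inr (Or.inr (Or.inr (Or.inr rfl))))).symm
      exact q25 (mul_right_cancel e)
    · rintro ⟨ha, hb⟩
      have e := (huni _ ha (Or.inr (Or.inr (Or.inl rfl)))).trans
        (huni _ hb (Or.inr (Or.inr (Or.inr (Or.inl rfl))))).symm
      exact q34 (mul_right_cancel e)
    · rintro ⟨ha, hb⟩
      have e := (huni _ ha (Or.inr (Or.inr (Or.inl rfl)))).trans
        (huni _ hb (Or.inr (Or.inr (Or.inr (Or.inr rfl))))).symm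
      exact q35 (mul_right_cancel e)
    · rintro ⟨ha, hb⟩
      have e := (huni _ ha (Or.inr (Or.inr (Or.inr (Or.inl rfl))))).trans
        (huni _ hb (Or.inr (Or.inr (Or.inr (Or.inr rfl))))).symm
      exact q45 (mul_right_cancel e)
  -- instantiate at 20 points and normalize
  have E01 := hu 1
  have E02 := hu s₁
  have E03 := hu s₂
  have E04 := hu (s₁ * s₂)
  have E05 := hu s₀⁻¹
  have E06 := hu (s₁ * s₀⁻¹)
  have E07 := hu (s₂ * s₀⁻¹)
  have E08 := hu (s₁ * (s₂ * s₀⁻¹))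
  have E09 := hu t
  have E10 := hu (t * s₁)
  have E11 := hu (t * s₂)
  have E12 := hu (t * (s₁ * s₂))
  have E13 := hu (t * s₀)
  have E14 := hu (t * (s₁ * s₀))
  have E15 := hu (t * (s₂ * s₀))
  have E16 := hu (t * (s₁ * (s₂ * s₀)))
  have E17 := hu (t * s₀⁻¹)
  have E18 := hu (t * (s₁ * s₀⁻¹))
  have E19 := hu (t * (s₂ * s₀⁻¹))
  have E20 := hu (t * (s₁ * (s₂ * s₀⁻¹)))
  simp only [mul_assoc, one_mul, mul_one, mul_inv_cancel, inv_mul_cancel,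
    mul_inv_cancel_left, inv_mul_cancel_left,
    mulmul1 hs₁inv, mulmul1 hs₂inv, mulmul1 ht,
    mulmul hc21, mulmul hc01, mulmul hc02, mulmul hc01', mulmul hc02',
    mulmul bt1, mulmul bt2, mulmul bt0, mulmul bt0',
    hc21, hc01, hc02, hc01', hc02', bt1, bt2, bt0, bt0',
    hs₁inv, hs₂inv, ht]
    at E01 E02 E03 E04 E05 E06 E07 E08 E09 E10 E11 E12 E13 E14 E15 E16 E17 E18 E19 E20
  -- aggregate into coset-level equations
  have F1 : 3 * (cnt D 1 + cnt D s₁ + cnt D s₂ + cnt D (s₁ * s₂)) +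
      (cnt D t + cnt D (t * s₁) + cnt D (t * s₂) + cnt D (t * (s₁ * s₂))) +
      (cnt D (t * s₀) + cnt D (t * (s₁ * s₀)) + cnt D (t * (s₂ * s₀)) +
        cnt D (t * (s₁ * (s₂ * s₀)))) = 4 := by
    clear E05 E06 E07 E08 E09 E10 E11 E12 E13 E14 E15 E16 E17 E18 E19 E20
    omega
  have F2 : 3 * (cnt D s₀⁻¹ + cnt D (s₁ * s₀⁻¹) + cnt D (s₂ * s₀⁻¹) +
        cnt D (s₁ * (s₂ * s₀⁻¹))) +
      (cnt D (t * s₀⁻¹) + cnt D (t * (s₁ * s₀⁻¹)) + cnt D (t * (s₂ * s₀⁻¹)) +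
        cnt D (t * (s₁ * (s₂ * s₀⁻¹)))) +
      (cnt D t + cnt D (t * s₁) + cnt D (t * s₂) + cnt D (t * (s₁ * s₂))) = 4 := by
    clear E01 E02 E03 E04 E09 E10 E11 E12 E13 E14 E15 E16 E17 E18 E19 E20
    omega
  have F3 : 3 * (cnt D t + cnt D (t * s₁) + cnt D (t * s₂) + cnt D (t * (s₁ * s₂))) +
      (cnt D 1 + cnt D s₁ + cnt D s₂ + cnt D (s₁ * s₂)) +
      (cnt D s₀⁻¹ + cnt D (s₁ * s₀⁻¹) + cnt D (s₂ * s₀⁻¹) +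
        cnt D (s₁ * (s₂ * s₀⁻¹))) = 4 := by
    clear E01 E02 E03 E04 E05 E06 E07 E08 E13 E14 E15 E16 E17 E18 E19 E20
    omega
  have F4 : 3 * (cnt D (t * s₀) + cnt D (t * (s₁ * s₀)) + cnt D (t * (s₂ * s₀)) +
        cnt D (t * (s₁ * (s₂ * s₀)))) +
      (cnt D s₀ + cnt D (s₁ * s₀) + cnt D (s₂ * s₀) + cnt D (s₁ * (s₂ * s₀))) +
      (cnt D 1 + cnt D s₁ + cnt D s₂ + cnt D (s₁ * s₂)) = 4 := by
    clear E01 E02 E03 E04 E05 E06 E07 E08 E09 E10 E11 E12 E17 E18 E19 E20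
    omega
  have F5 : 3 * (cnt D (t * s₀⁻¹) + cnt D (t * (s₁ * s₀⁻¹)) + cnt D (t * (s₂ * s₀⁻¹)) +
        cnt D (t * (s₁ * (s₂ * s₀⁻¹)))) +
      (cnt D s₀⁻¹ + cnt D (s₁ * s₀⁻¹) + cnt D (s₂ * s₀⁻¹) +
        cnt D (s₁ * (s₂ * s₀⁻¹))) +
      (cnt D (s₀⁻¹ * s₀⁻¹) + cnt D (s₁ * (s₀⁻¹ * s₀⁻¹)) + cnt D (s₂ * (s₀⁻¹ * s₀⁻¹)) +
        cnt D (s₁ * (s₂ * (s₀⁻¹ * s₀⁻¹)))) = 4 := by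
    clear E01 E02 E03 E04 E05 E06 E07 E08 E09 E10 E11 E12 E13 E14 E15 E16
    omega
  exact numeric_final _ _ _ _ _ _ _ F1 F2 F3 F4 F5
end
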